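/- (Safe disassociation via partial suppression.) In the partial suppression setup with parameters k, m, δ (natural numbers, k ≥ 1, m ≥ 1), assume the preconditions: the number of records of R is at most δ − 2, and s(I, R) ≥ k + min(c, m). Then the partially suppressed chunk R' satisfies: (i) the number of records of R' equals (number of records of R) + 2, hence is at most δ; (ii) for every nonempty finset X ⊆ I with |X| ≤ m, s(X, R') ≥ k (the kᵐ-anonymity constraint on subsets of I is preserved); and (iii) for every z ∈ I, s(I, R') < s({z}, R'), i.e., R' is not subject to a cover problem for I. -/
import Mathlib


variable {α : Type*} [DecidableEq α]

/-- Support of an itemset `I` in a record chunk `R`: the number of records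
of `R`, counted with multiplicity, that are supersets of `I`. -/
def supp (I : Finset α) (R : Multiset (Finset α)) : ℕ :=
  (R.filter fun r => I ⊆ r).card

lemma supp_add (X : Finset α) (A B : Multiset (Finset α)) :
    supp X (A + B) = supp X A + supp X B := by
  simp [supp, Multiset.filter_add]

lemma supp_nsmul_singleton (X I : Finset α) (c : ℕ) :
    supp X (c • ({I} : Multiset (Finset α))) = if X ⊆ I then c else 0 := by
  rw [supp, Multiset.nsmul_singleton]
  by_cases h : X ⊆ I
  · rw [Multiset.filter_eq_self.2 (by intro a ha; rw [Multiset.eq_of_mem_replicate ha]; exact h)]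
    simp [h]
  · rw [Multiset.filter_eq_nil.2 (by intro a ha; rw [Multiset.eq_of_mem_replicate ha]; exact h)]
    simp [h]

lemma supp_pair (X L₁ L₂ : Finset α) :
    supp X ({L₁, L₂} : Multiset (Finset α))
      = (if X ⊆ L₁ then 1 else 0) + (if X ⊆ L₂ then 1 else 0) := by
  show Multiset.card (Multiset.filter _ (L₁ ::ₘ {L₂})) = _
  rw [Multiset.filter_cons, Multiset.filter_singleton]
  by_cases h1 : X ⊆ L₁ <;> by_cases h2 : X ⊆ L₂ <;> simp [h1, h2]

lemma supp_map (c : ℕ) (X : Finset α) (f : Fin c → Finset α) :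
    supp X ((Finset.univ.val).map f) = (Finset.univ.filter fun i => X ⊆ f i).card := by
  rw [supp, Multiset.filter_map, Multiset.card_map]
  rfl

lemma supp_anti {X Y : Finset α} (h : X ⊆ Y) (R : Multiset (Finset α)) :
    supp Y R ≤ supp X R :=
  Multiset.card_le_card (Multiset.monotone_filter_right R fun _ hYr => h.trans hYr)

lemma supp_le_card (X : Finset α) (R : Multiset (Finset α)) :
    supp X R ≤ Multiset.card R :=
  Multiset.card_le_card (Multiset.filter_le _ R)

lemma sum_inter_parts (c : ℕ) (P : Fin c → Finset α) (I : Finset α)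
    (hPdisj : ∀ i j : Fin c, i ≠ j → Disjoint (P i) (P j))
    (hPunion : Finset.univ.biUnion P = I)
    (X : Finset α) (hX : X ⊆ I) :
    ∑ i : Fin c, (X ∩ P i).card = X.card := by
  rw [← Finset.card_biUnion (fun i _ j _ hij =>
    Finset.disjoint_of_subset_left Finset.inter_subset_right
      (Finset.disjoint_of_subset_right Finset.inter_subset_right (hPdisj i j hij)))]
  congr 1
  ext x
  simp only [Finset.mem_biUnion, Finset.mem_inter, Finset.mem_univ, true_and]
  constructor
  · rintro ⟨i, hx, _⟩; exact hx
  · intro hx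
    have : x ∈ Finset.univ.biUnion P := hPunion.symm ▸ hX hx
    simp only [Finset.mem_biUnion, Finset.mem_univ, true_and] at this
    obtain ⟨i, hi⟩ := this
    exact ⟨i, hx, hi⟩

lemma card_bad_le (c : ℕ) (P : Fin c → Finset α) (X : Finset α) :
    (Finset.univ.filter fun i : Fin c => ¬ Disjoint X (P i)).card
      ≤ ∑ i : Fin c, (X ∩ P i).card := by
  rw [Finset.card_eq_sum_ones]
  refine le_trans (Finset.sum_le_sum fun i hi => ?_)
    (Finset.sum_le_sum_of_subset (Finset.filter_subset _ _))
  rw [Finset.mem_filter] at hi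
  exact Finset.Nonempty.card_pos (Finset.not_disjoint_iff_nonempty_inter.1 hi.2)

lemma sum_inter_singleton (c : ℕ) (P : Fin c → Finset α) (z : α) :
    ∑ i : Fin c, (({z} : Finset α) ∩ P i).card
      = (Finset.univ.filter fun i : Fin c => z ∈ P i).card := by
  rw [Finset.card_eq_sum_ones, Finset.sum_filter]
  refine Finset.sum_congr rfl fun i _ => ?_
  by_cases h : z ∈ P i <;>
    simp [h, Finset.singleton_inter_of_mem, Finset.singleton_inter_of_notMem]

theorem safe_disassociation_via_partial_suppression
    (I : Finset α) (hI : 2 ≤ I.card)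
    (c : ℕ) (hc : c = (I.card + 1) / 2)
    (P : Fin c → Finset α)
    (hPdisj : ∀ i j : Fin c, i ≠ j → Disjoint (P i) (P j))
    (hPne : ∀ i : Fin c, (P i).Nonempty)
    (hPcard : ∀ i : Fin c, (P i).card ≤ 2)
    (hPunion : Finset.univ.biUnion P = I)
    (L₁ L₂ : Finset α)
    (hLunion : L₁ ∪ L₂ = I) (hLdisj : L₁ ∩ L₂ = ∅)
    (hsplit : ∀ i : Fin c, (P i).card = 2 →
      (P i ∩ L₁).card = 1 ∧ (P i ∩ L₂).card = 1)
    (R : Multiset (Finset α))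
    (hR : c • ({I} : Multiset (Finset α)) ≤ R)
    (R' : Multiset (Finset α))
    (hR' : R' = (R - c • ({I} : Multiset (Finset α)))
      + (Finset.univ.val.map fun i : Fin c => I \ P i)
      + {L₁, L₂})
    (k m δ : ℕ) (hk : 1 ≤ k) (hm : 1 ≤ m)
    (hsize : Multiset.card R ≤ δ - 2)
    (hsupp : k + min c m ≤ supp I R) :
    (Multiset.card R' = Multiset.card R + 2 ∧ Multiset.card R' ≤ δ) ∧
    (∀ X : Finset α, X ⊆ I → X.Nonempty → X.card ≤ m → k ≤ supp X R') ∧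
    (∀ z ∈ I, supp I R' < supp {z} R') := by
  have hc1 : 1 ≤ c := by omega
  have hPI : ∀ i, P i ⊆ I := fun i =>
    hPunion ▸ Finset.subset_biUnion_of_mem P (Finset.mem_univ i)
  set R₀ := R - c • ({I} : Multiset (Finset α)) with hR₀
  have hRdec : R₀ + c • ({I} : Multiset (Finset α)) = R := tsub_add_cancel_of_le hR
  have hsuppR : ∀ X : Finset α, X ⊆ I → supp X R = supp X R₀ + c := by
    intro X hX
    rw [← hRdec, supp_add, supp_nsmul_singleton, if_pos hX]
  have hsuppR' : ∀ X : Finset α, supp X R' =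
      supp X R₀ + (Finset.univ.filter fun i => X ⊆ I \ P i).card
        + ((if X ⊆ L₁ then 1 else 0) + (if X ⊆ L₂ then 1 else 0)) := by
    intro X
    rw [hR', supp_add, supp_add, supp_map, supp_pair]
  -- card facts
  have hcle : c ≤ Multiset.card R := by
    have := Multiset.card_le_card hR
    simpa using this
  have hcR₀ : Multiset.card R₀ = Multiset.card R - c := by
    rw [hR₀, Multiset.card_sub hR]
    simp
  have hcR' : Multiset.card R' = Multiset.card R + 2 := by
    rw [hR']
    simp only [Multiset.card_add, Multiset.card_map, hcR₀]
    have : Multiset.card (Finset.univ.val : Multiset (Fin c)) = c := by simp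
    rw [this]
    have h2 : Multiset.card ({L₁, L₂} : Multiset (Finset α)) = 2 := rfl
    rw [h2]
    omega
  have hRpos : 1 ≤ Multiset.card R := by
    have h1 := supp_le_card I R
    omega
  refine ⟨⟨hcR', by omega⟩, ?_, ?_⟩
  · -- (ii)
    intro X hXI hXne hXm
    have hbad : (Finset.univ.filter fun i : Fin c => ¬ Disjoint X (P i)).card ≤ X.card := by
      calc _ ≤ ∑ i : Fin c, (X ∩ P i).card := card_bad_le c P X
        _ = X.card := sum_inter_parts c P I hPdisj hPunion X hXI
    have hsplitc := Finset.card_filter_add_card_filter_not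
      (s := (Finset.univ : Finset (Fin c))) (p := fun i => Disjoint X (P i))
    have hgood : (Finset.univ.filter fun i : Fin c => X ⊆ I \ P i).card
        = (Finset.univ.filter fun i : Fin c => Disjoint X (P i)).card := by
      congr 1
      apply Finset.filter_congr
      intro i _
      simp [Finset.subset_sdiff, hXI]
    have hXR : k + min c m ≤ supp X R := le_trans hsupp (supp_anti hXI R)
    have hXdec := hsuppR X hXI
    have hX' := hsuppR' X
    have hcard_univ : (Finset.univ : Finset (Fin c)).card = c := by simp
    rw [hcard_univ] at hsplitc
    omega
  · -- (iii)
    intro z hz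
    -- a part of size two exists
    have htwo : ∃ i : Fin c, (P i).card = 2 := by
      by_contra h
      push_neg at h
      have hone : ∀ i, (P i).card = 1 := by
        intro i
        have h1 := hPcard i
        have h2 := (hPne i).card_pos
        have h3 := h i
        omega
      have hIc : I.card = c := by
        rw [← hPunion, Finset.card_biUnion (fun i _ j _ hij => hPdisj i j hij)]
        simp [hone]
      omega
    obtain ⟨i0, hi0⟩ := htwo
    obtain ⟨h1, h2⟩ := hsplit i0 hi0
    obtain ⟨w1, hw1⟩ := Finset.card_pos.1 (by omega : 0 < (P i0 ∩ L₁).card)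
    obtain ⟨w2, hw2⟩ := Finset.card_pos.1 (by omega : 0 < (P i0 ∩ L₂).card)
    rw [Finset.mem_inter] at hw1 hw2
    have hnotL1 : ¬ I ⊆ L₁ := by
      intro hsub
      have : w2 ∈ L₁ ∩ L₂ := Finset.mem_inter.2 ⟨hsub (hPI i0 hw2.1), hw2.2⟩
      rw [hLdisj] at this
      exact absurd this (Finset.notMem_empty _)
    have hnotL2 : ¬ I ⊆ L₂ := by
      intro hsub
      have : w1 ∈ L₁ ∩ L₂ := Finset.mem_inter.2 ⟨hw1.2, hsub (hPI i0 hw1.1)⟩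
      rw [hLdisj] at this
      exact absurd this (Finset.notMem_empty _)
    -- supp I R' = supp I R₀
    have hgoodI : (Finset.univ.filter fun i : Fin c => I ⊆ I \ P i).card = 0 := by
      rw [Finset.card_eq_zero, Finset.filter_eq_empty_iff]
      intro i _ hsub
      obtain ⟨y, hy⟩ := hPne i
      have := hsub (hPI i hy)
      rw [Finset.mem_sdiff] at this
      exact this.2 hy
    have hIR' : supp I R' = supp I R₀ := by
      rw [hsuppR' I, hgoodI, if_neg hnotL1, if_neg hnotL2]
      omega
    -- supp {z} R' = supp {z} R
    have hzI : ({z} : Finset α) ⊆ I := Finset.singleton_subset_iff.2 hz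
    have hzcount : (Finset.univ.filter fun i : Fin c => z ∈ P i).card = 1 := by
      rw [← sum_inter_singleton, sum_inter_parts c P I hPdisj hPunion _ hzI,
        Finset.card_singleton]
    have hsplitz := Finset.card_filter_add_card_filter_not
      (s := (Finset.univ : Finset (Fin c))) (p := fun i => z ∈ P i)
    have hcard_univ : (Finset.univ : Finset (Fin c)).card = c := by simp
    rw [hcard_univ, hzcount] at hsplitz
    have hgoodz : (Finset.univ.filter fun i : Fin c => ({z} : Finset α) ⊆ I \ P i).card
        = c - 1 := by
      have heq : (Finset.univ.filter fun i : Fin c => ({z} : Finset α) ⊆ I \ P i)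
          = (Finset.univ.filter fun i : Fin c => z ∉ P i) := by
        apply Finset.filter_congr
        intro i _
        simp [Finset.singleton_subset_iff, Finset.mem_sdiff, hz]
      rw [heq]
      omega
    have hzL : (if ({z} : Finset α) ⊆ L₁ then 1 else 0)
        + (if ({z} : Finset α) ⊆ L₂ then 1 else 0) = 1 := by
      have hzmem : z ∈ L₁ ∪ L₂ := hLunion.symm ▸ hz
      rw [Finset.mem_union] at hzmem
      have hnot : ¬ (z ∈ L₁ ∧ z ∈ L₂) := by
        rintro ⟨ha, hb⟩
        have : z ∈ L₁ ∩ L₂ := Finset.mem_inter.2 ⟨ha, hb⟩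
        rw [hLdisj] at this
        exact absurd this (Finset.notMem_empty _)
      by_cases ha : z ∈ L₁ <;> by_cases hb : z ∈ L₂ <;>
        simp [Finset.singleton_subset_iff, ha, hb] at hnot ⊢
      tauto
    have hzR' : supp {z} R' = supp {z} R := by
      rw [hsuppR' {z}, hgoodz, hzL, hsuppR {z} hzI]
      omega
    have hmono := supp_anti hzI R
    have hIdec := hsuppR I Finset.Subset.rfl
    omega
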